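/- Under the root-subgroup data, Levi data, and almost-product data hypotheses, suppose K_L ≤ L satisfies conditions (3.1) and (3.2) with respect to L, and K_h ≤ G_h satisfies conditions (3.1) and (3.2) with respect to G_h. Then G_h ∩ K_L = K_h if and only if: K_L ∩ U_α = K_h ∩ U_α for every α ∈ Φ_h ∩ Φ_red, and Z_h ∩ K_L = Z_h ∩ K_h. (Abstract form of the paper's Corollary characterizing when G_h(F) ∩ K_L = K_h.) -/

import Mathlib

open Pointwise

section AxiomaticFramework

variable {G : Type*} [Group G] {ι : Type*}

/-- The subgroup generated by the root subgroups `U α` for `α ∈ s`. -/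
def genU (U : ι → Subgroup G) (s : Finset ι) : Subgroup G := ⨆ α ∈ s, U α

/-- The multiplication map attached to an enumeration `l` of a set of roots is a
bijection from `∏ (K ∩ U α)` onto `K ∩ T`. -/
def ProdBij (U : ι → Subgroup G) (K T : Subgroup G) (l : List ι) : Prop :=
  Function.Injective
    (fun x : ∀ i : Fin l.length, ↥(K ⊓ U (l.get i)) =>
      (List.ofFn fun i => ((x i : G))).prod) ∧
  Set.range
    (fun x : ∀ i : Fin l.length, ↥(K ⊓ U (l.get i)) =>
      (List.ofFn fun i => ((x i : G))).prod)
    = ((K ⊓ T : Subgroup G) : Set G)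

/-- Condition (3.1) for a subgroup `K`, relative to root subgroups `U`,
reduced positive roots `PRp`, reduced negative roots `PRm`, `U⁺ = Up`, `U⁻ = Um`, `N`. -/
def Cond31 (U : ι → Subgroup G) (PRp PRm : Finset ι) (Up Um N K : Subgroup G) : Prop :=
  ((K : Set G) = ↑(K ⊓ Um) * ↑(K ⊓ Up) * ↑(K ⊓ N)) ∧
  ((K : Set G) = ↑(K ⊓ Up) * ↑(K ⊓ Um) * ↑(K ⊓ N)) ∧
  (∀ l : List ι, l.Nodup → (∀ a, a ∈ l ↔ a ∈ PRp) → ProdBij U K Up l) ∧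
  (∀ l : List ι, l.Nodup → (∀ a, a ∈ l ↔ a ∈ PRm) → ProdBij U K Um l)

/-- Condition (3.2) for a subgroup `K`. -/
def Cond32 (Up Um Z K : Subgroup G) : Prop :=
  (K : Set G) = ↑(K ⊓ Up) * ↑(K ⊓ Um) * ↑(K ⊓ Up) * ↑(K ⊓ Z)

/-- Root-subgroup data: a finite set of roots `Phi` with a distinguished subset `PhiRed`
and a partition `Phi = PhiP ⊔ PhiM`, root subgroups `U α`, and subgroups `Z ≤ N`. -/
structure RootData (G : Type*) [Group G] (ι : Type*) [DecidableEq ι] where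
  Phi : Finset ι
  PhiRed : Finset ι
  PhiP : Finset ι
  PhiM : Finset ι
  red_sub : PhiRed ⊆ Phi
  union_eq : PhiP ∪ PhiM = Phi
  disj : Disjoint PhiP PhiM
  U : ι → Subgroup G
  Z : Subgroup G
  N : Subgroup G
  hZN : Z ≤ N

variable [DecidableEq ι]

namespace RootData

variable (D : RootData G ι)

/-- `U⁺`, the subgroup generated by the `U α`, `α ∈ Φ⁺`. -/
def Up : Subgroup G := genU D.U D.PhiP

/-- `U⁻`, the subgroup generated by the `U α`, `α ∈ Φ⁻`. -/
def Um : Subgroup G := genU D.U D.PhiM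

/-- Condition (3.1) with respect to `G`. -/
def cond31 (K : Subgroup G) : Prop :=
  Cond31 D.U (D.PhiRed ∩ D.PhiP) (D.PhiRed ∩ D.PhiM) D.Up D.Um D.N K

/-- Condition (3.2) with respect to `G`. -/
def cond32 (K : Subgroup G) : Prop := Cond32 D.Up D.Um D.Z K

end RootData

/-- Levi data (weak form): a subset `Φ_J ⊆ Φ` and subgroups `L, Q` with `Z ≤ L`,
`U_α ≤ L` for `α ∈ Φ_J`, and `U_J^± = L ∩ U^±` generated by the `U_α`, `α ∈ Φ_J^±`. -/
structure LeviDataW (D : RootData G ι) where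
  PhiJ : Finset ι
  J_sub : PhiJ ⊆ D.Phi
  L : Subgroup G
  Q : Subgroup G
  hZL : D.Z ≤ L
  hUL : ∀ α ∈ PhiJ, D.U α ≤ L
  hUJp : L ⊓ D.Up = genU D.U (PhiJ ∩ D.PhiP)
  hUJm : L ⊓ D.Um = genU D.U (PhiJ ∩ D.PhiM)

namespace LeviDataW

variable {D : RootData G ι} (LD : LeviDataW D)

/-- Condition (3.1) with respect to the Levi subgroup `L`. -/
def cond31L (K : Subgroup G) : Prop :=
  Cond31 D.U (LD.PhiJ ∩ D.PhiRed ∩ D.PhiP) (LD.PhiJ ∩ D.PhiRed ∩ D.PhiM)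
    (LD.L ⊓ D.Up) (LD.L ⊓ D.Um) (D.N ⊓ LD.L) K

/-- Condition (3.2) with respect to the Levi subgroup `L`. -/
def cond32L (K : Subgroup G) : Prop :=
  Cond32 (LD.L ⊓ D.Up) (LD.L ⊓ D.Um) D.Z K

end LeviDataW

/-- Almost-product data: a normal-factor subgroup `G_h ≤ L` with roots `Φ_h`, a
complementary set of roots `Φ_{l'}`, and a quotient homomorphism `π_l : L → G_l`. -/
structure APData {D : RootData G ι} (LD : LeviDataW D) (Gl : Type*) [Group Gl] where
  Gh : Subgroup G
  hGhL : Gh ≤ LD.L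
  PhiH : Finset ι
  PhiL' : Finset ι
  hpartJ : PhiH ∪ PhiL' = LD.PhiJ
  hdisjHL : Disjoint PhiH PhiL'
  hUGh : ∀ α ∈ PhiH, D.U α ≤ Gh
  /-- every element of `U_h⁺U_h⁻` commutes with every element of `U_{l'}⁺U_{l'}⁻` -/
  hcomm : ∀ x ∈ ((genU D.U (PhiH ∩ D.PhiP) : Subgroup G) : Set G) *
      ((genU D.U (PhiH ∩ D.PhiM) : Subgroup G) : Set G),
      ∀ y ∈ ((genU D.U (PhiL' ∩ D.PhiP) : Subgroup G) : Set G) *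
      ((genU D.U (PhiL' ∩ D.PhiM) : Subgroup G) : Set G),
      x * y = y * x
  /-- the quotient homomorphism `π_l : L → G_l` -/
  pil : ↥LD.L →* Gl
  /-- `G_h ⊆ ker π_l` -/
  hGh_ker : ∀ x : ↥LD.L, (x : G) ∈ Gh → pil x = 1
  /-- `Z ∩ ker π_l ⊆ G_h` -/
  hker_Z : ∀ x : ↥LD.L, (x : G) ∈ D.Z → pil x = 1 → (x : G) ∈ Gh
  /-- `π_l` is injective on `U_{l'}⁺` -/
  hinj_p : ∀ x y : ↥LD.L, (x : G) ∈ genU D.U (PhiL' ∩ D.PhiP) →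
      (y : G) ∈ genU D.U (PhiL' ∩ D.PhiP) → pil x = pil y → x = y
  /-- `π_l` is injective on `U_{l'}⁻` -/
  hinj_m : ∀ x y : ↥LD.L, (x : G) ∈ genU D.U (PhiL' ∩ D.PhiM) →
      (y : G) ∈ genU D.U (PhiL' ∩ D.PhiM) → pil x = pil y → x = y
  /-- `Z_l ⊆ N_l` -/
  hZlNl : (D.Z.subgroupOf LD.L).map pil ≤ ((D.N ⊓ LD.L).subgroupOf LD.L).map pil
  /-- `Z_l` normalizes `U_l⁺` -/
  hZl_norm_p : ∀ z ∈ (D.Z.subgroupOf LD.L).map pil,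
      ∀ u ∈ ((genU D.U (PhiL' ∩ D.PhiP)).subgroupOf LD.L).map pil,
      z * u * z⁻¹ ∈ ((genU D.U (PhiL' ∩ D.PhiP)).subgroupOf LD.L).map pil
  /-- `Z_l` normalizes `U_l⁻` -/
  hZl_norm_m : ∀ z ∈ (D.Z.subgroupOf LD.L).map pil,
      ∀ u ∈ ((genU D.U (PhiL' ∩ D.PhiM)).subgroupOf LD.L).map pil,
      z * u * z⁻¹ ∈ ((genU D.U (PhiL' ∩ D.PhiM)).subgroupOf LD.L).map pil
  /-- in `G_l`, the only solution of `u⁺u⁻n = 1` with `u⁺ ∈ U_l⁺`, `u⁻ ∈ U_l⁻`,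
  `n ∈ N_l` is the trivial one -/
  huniq : ∀ up um n : Gl,
      up ∈ ((genU D.U (PhiL' ∩ D.PhiP)).subgroupOf LD.L).map pil →
      um ∈ ((genU D.U (PhiL' ∩ D.PhiM)).subgroupOf LD.L).map pil →
      n ∈ ((D.N ⊓ LD.L).subgroupOf LD.L).map pil →
      up * um * n = 1 → up = 1 ∧ um = 1 ∧ n = 1

namespace APData

variable {D : RootData G ι} {LD : LeviDataW D} {Gl : Type*} [Group Gl] (AP : APData LD Gl)

/-- Condition (3.1) with respect to the normal subgroup `G_h`. -/
def cond31h (Kh : Subgroup G) : Prop :=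
  Cond31 D.U (AP.PhiH ∩ D.PhiRed ∩ D.PhiP) (AP.PhiH ∩ D.PhiRed ∩ D.PhiM)
    (genU D.U (AP.PhiH ∩ D.PhiP)) (genU D.U (AP.PhiH ∩ D.PhiM)) (D.N ⊓ AP.Gh) Kh

/-- Condition (3.2) with respect to the normal subgroup `G_h`. -/
def cond32h (Kh : Subgroup G) : Prop :=
  Cond32 (genU D.U (AP.PhiH ∩ D.PhiP)) (genU D.U (AP.PhiH ∩ D.PhiM)) (D.Z ⊓ AP.Gh) Kh

end APData

end AxiomaticFramework

/-! The forward direction holds because `U_α ≤ G_h` for `α ∈ Φ_h`. Conversely, (3.1) and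
(3.2) write `K_h` as a product of its intersections with the reduced root subgroups and
with `Z_h`, all of which lie in `G_h ∩ K_L`.
For `x ∈ G_h ∩ K_L`, write `x = u v u' z` by (3.2) for `K_L` and split each unipotent factor,
using (3.1) and the fact that the `h`-roots commute with the `l'`-roots, as `a b` with
`a ∈ K_h ∩ U_h^±` and `b ∈ U_{l'}^±`; then `x = a₁a₂a₃ · b₁b₂b₃z`. Since `π_l` kills `G_h`,
`π_l(b₁b₂b₃z) = 1`, and uniqueness of `u⁺u⁻n` decompositions in `G_l` together with
injectivity of `π_l` on `U_{l'}^±` gives `b₁b₂b₃ = 1` and `z ∈ G_h`, so `x = a₁a₂a₃z ∈ K_h`. -/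

namespace Subgroup

variable {G : Type*} [Group G]

theorem exists_mul_eq_of_mem_sup_of_commute {A B : Subgroup G}
    (hAB : ∀ a ∈ A, ∀ b ∈ B, Commute a b) {x : G} (hx : x ∈ A ⊔ B) :
    ∃ a ∈ A, ∃ b ∈ B, a * b = x := by
  have hA : A ≤ centralizer (B : Set G) := fun a ha =>
    mem_centralizer_iff.mpr fun b hb => (hAB a ha b hb).eq.symm
  have hx' : x ∈ (A : Set G) * B := by
    rw [← coe_mul_of_left_le_normalizer_right A B (hA.trans (centralizer_le_normalizer _))]
    exact hx
  exact Set.mem_mul.mp hx'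

end Subgroup

section RootConditions

variable {G : Type*} [Group G] {ι : Type*} {U : ι → Subgroup G}

theorem le_genU {s : Finset ι} {α : ι} (h : α ∈ s) : U α ≤ genU U s :=
  le_iSup₂ (f := fun i (_ : i ∈ s) => U i) α h

theorem genU_le {s : Finset ι} {H : Subgroup G} (h : ∀ α ∈ s, U α ≤ H) : genU U s ≤ H :=
  iSup₂_le h

theorem ProdBij.inf_le {K T H : Subgroup G} {l : List ι} (h : ProdBij U K T l)
    (hH : ∀ α ∈ l, K ⊓ U α ≤ H) : K ⊓ T ≤ H := by
  intro x hx
  obtain ⟨f, rfl⟩ := h.2.symm.subset hx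
  refine H.list_prod_mem fun g hg => ?_
  obtain ⟨i, rfl⟩ := List.mem_ofFn.mp hg
  exact hH _ (List.get_mem l i) (f i).2

theorem inf_le_of_prodBij {K T H : Subgroup G} {S : Finset ι}
    (h : ∀ l : List ι, l.Nodup → (∀ a, a ∈ l ↔ a ∈ S) → ProdBij U K T l)
    (hH : ∀ α ∈ S, K ⊓ U α ≤ H) : K ⊓ T ≤ H :=
  (h S.toList S.nodup_toList fun _ => S.mem_toList).inf_le fun α hα =>
    hH α (S.mem_toList.mp hα)

theorem Cond32.exists_mul_eq {Up Um Z K : Subgroup G} (h : Cond32 Up Um Z K) {x : G}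
    (hx : x ∈ K) :
    ∃ p ∈ K ⊓ Up, ∃ m ∈ K ⊓ Um, ∃ p' ∈ K ⊓ Up, ∃ z ∈ K ⊓ Z, p * m * p' * z = x := by
  have hx' : x ∈ ((K ⊓ Up : Subgroup G) : Set G) * ↑(K ⊓ Um) * ↑(K ⊓ Up) * ↑(K ⊓ Z) :=
    h ▸ hx
  obtain ⟨_, ⟨_, ⟨p, hp, m, hm, rfl⟩, p', hp', rfl⟩, z, hz, rfl⟩ := hx'
  exact ⟨p, hp, m, hm, p', hp', z, hz, rfl⟩

theorem le_of_cond31_cond32 {PRp PRm : Finset ι} {Up Um N Z K H : Subgroup G}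
    (h31 : Cond31 U PRp PRm Up Um N K) (h32 : Cond32 Up Um Z K)
    (hp : ∀ α ∈ PRp, K ⊓ U α ≤ H) (hm : ∀ α ∈ PRm, K ⊓ U α ≤ H) (hZ : K ⊓ Z ≤ H) :
    K ≤ H := by
  intro x hx
  obtain ⟨p, hp', m, hm', p', hp'', z, hz, rfl⟩ := h32.exists_mul_eq hx
  have hUp : K ⊓ Up ≤ H := inf_le_of_prodBij h31.2.2.1 hp
  have hUm : K ⊓ Um ≤ H := inf_le_of_prodBij h31.2.2.2 hm
  exact H.mul_mem (H.mul_mem (H.mul_mem (hUp hp') (hUm hm')) (hUp hp'')) (hZ hz)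

end RootConditions

theorem eq_one_of_mul_eq_one_of_unique {H : Type*} [Group H] {P M N Z : Subgroup H}
    (hZN : Z ≤ N) (hZP : ∀ z ∈ Z, ∀ u ∈ P, z * u * z⁻¹ ∈ P)
    (huniq : ∀ up um n : H, up ∈ P → um ∈ M → n ∈ N → up * um * n = 1 →
      up = 1 ∧ um = 1 ∧ n = 1)
    {p₁ m p₂ z : H} (hp₁ : p₁ ∈ P) (hm : m ∈ M) (hp₂ : p₂ ∈ P) (hz : z ∈ Z)
    (h : p₁ * m * p₂ * z = 1) : p₂ * p₁ = 1 ∧ m = 1 ∧ z = 1 := by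
  have hp₂' : z⁻¹ * p₂ * z ∈ P := by simpa using hZP z⁻¹ (Z.inv_mem hz) p₂ hp₂
  -- conjugating the cyclic rotation `p₂ z p₁ m = 1` by `z` brings it to the form `u⁺ u⁻ n = 1`
  have h' : (z⁻¹ * p₂ * z * p₁) * m * z = 1 := by
    calc (z⁻¹ * p₂ * z * p₁) * m * z
        = z⁻¹ * (p₂ * z * (p₁ * m * p₂ * z) * (p₂ * z)⁻¹) * z := by group
      _ = 1 := by rw [h]; group
  obtain ⟨hp, rfl, rfl⟩ := huniq _ _ _ (P.mul_mem hp₂' hp₁) hm (hZN hz) h'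
  exact ⟨by simpa using hp, rfl, rfl⟩

namespace APData

variable {G : Type*} [Group G] {ι : Type*} [DecidableEq ι] {D : RootData G ι}
  {LD : LeviDataW D} {Gl : Type*} [Group Gl] (AP : APData LD Gl)

abbrev Uhp : Subgroup G := genU D.U (AP.PhiH ∩ D.PhiP)
abbrev Uhm : Subgroup G := genU D.U (AP.PhiH ∩ D.PhiM)
abbrev Ulp : Subgroup G := genU D.U (AP.PhiL' ∩ D.PhiP)
abbrev Ulm : Subgroup G := genU D.U (AP.PhiL' ∩ D.PhiM)

theorem genU_PhiH_le_Gh (S : Finset ι) : genU D.U (AP.PhiH ∩ S) ≤ AP.Gh :=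
  genU_le fun α hα => AP.hUGh α (Finset.mem_inter.mp hα).1

theorem genU_PhiL'_le_L (S : Finset ι) : genU D.U (AP.PhiL' ∩ S) ≤ LD.L :=
  genU_le fun α hα => LD.hUL α (AP.hpartJ ▸ Finset.mem_union_right _ (Finset.mem_inter.mp hα).1)

theorem commute_of_mem {a b : G} (ha : a ∈ AP.Uhp ⊔ AP.Uhm) (hb : b ∈ AP.Ulp ⊔ AP.Ulm) :
    Commute a b := by
  have hmem : ∀ {A B : Subgroup G} {x : G}, x ∈ A ∨ x ∈ B → x ∈ (A : Set G) * B := by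
    rintro A B x (hx | hx)
    · exact Set.subset_mul_left _ B.one_mem hx
    · exact Set.subset_mul_right _ A.one_mem hx
  have hU : AP.Uhp ⊔ AP.Uhm ≤ Subgroup.centralizer (AP.Ulp ⊔ AP.Ulm : Subgroup G) := by
    refine sup_le ?_ ?_ <;> rw [Subgroup.le_centralizer_iff] <;> refine sup_le ?_ ?_ <;>
      intro y hy <;> refine Subgroup.mem_centralizer_iff.mpr fun x hx => ?_ <;>
      exact AP.hcomm x (hmem (by tauto)) y (hmem (by tauto))
  exact (Subgroup.mem_centralizer_iff.mp (hU ha) b hb).symm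

theorem exists_mul_eq_of_prodBij {KL Kh T : Subgroup G} {S : Finset ι} {u : G}
    (hPB : ∀ l : List ι, l.Nodup → (∀ a, a ∈ l ↔ a ∈ LD.PhiJ ∩ D.PhiRed ∩ S) →
      ProdBij D.U KL T l)
    (hU : ∀ α ∈ AP.PhiH ∩ D.PhiRed, KL ⊓ D.U α = Kh ⊓ D.U α)
    (hcomm : ∀ a ∈ genU D.U (AP.PhiH ∩ S), ∀ b ∈ genU D.U (AP.PhiL' ∩ S), Commute a b)
    (hu : u ∈ KL ⊓ T) :
    ∃ a ∈ Kh ⊓ genU D.U (AP.PhiH ∩ S), ∃ b ∈ KL ⊓ genU D.U (AP.PhiL' ∩ S), a * b = u := by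
  refine Subgroup.exists_mul_eq_of_mem_sup_of_commute (A := Kh ⊓ genU D.U (AP.PhiH ∩ S))
    (B := KL ⊓ genU D.U (AP.PhiL' ∩ S))
    (fun a ha b hb => hcomm a (Subgroup.mem_inf.mp ha).2 b (Subgroup.mem_inf.mp hb).2)
    (inf_le_of_prodBij hPB (fun α hα => ?_) hu)
  obtain ⟨⟨hαJ, hαR⟩, hαS⟩ := Finset.mem_inter.mp hα |>.imp_left Finset.mem_inter.mp
  rcases Finset.mem_union.mp (AP.hpartJ ▸ hαJ) with hαh | hαl
  · rw [hU α (Finset.mem_inter.mpr ⟨hαh, hαR⟩)]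
    exact le_sup_of_le_left (inf_le_inf_left _ (le_genU (Finset.mem_inter.mpr ⟨hαh, hαS⟩)))
  · exact le_sup_of_le_right (inf_le_inf_left _ (le_genU (Finset.mem_inter.mpr ⟨hαl, hαS⟩)))

theorem mul_eq_one_of_mul_mem_Gh {b₁ b₂ b₃ z : G} (hb₁ : b₁ ∈ AP.Ulp) (hb₂ : b₂ ∈ AP.Ulm)
    (hb₃ : b₃ ∈ AP.Ulp) (hz : z ∈ D.Z) (h : b₁ * b₂ * b₃ * z ∈ AP.Gh) :
    b₁ * b₂ * b₃ = 1 ∧ z ∈ AP.Gh := by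
  let c₁ : LD.L := ⟨b₁, AP.genU_PhiL'_le_L _ hb₁⟩
  let c₂ : LD.L := ⟨b₂, AP.genU_PhiL'_le_L _ hb₂⟩
  let c₃ : LD.L := ⟨b₃, AP.genU_PhiL'_le_L _ hb₃⟩
  let w : LD.L := ⟨z, LD.hZL hz⟩
  have hπ : AP.pil c₁ * AP.pil c₂ * AP.pil c₃ * AP.pil w = 1 := by
    simpa only [map_mul] using AP.hGh_ker (c₁ * c₂ * c₃ * w) h
  have hmap : ∀ {K : Subgroup G} {c : LD.L}, (c : G) ∈ K →
      AP.pil c ∈ (K.subgroupOf LD.L).map AP.pil :=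
    fun hc => Subgroup.mem_map_of_mem _ (Subgroup.mem_subgroupOf.mpr hc)
  obtain ⟨h31, h2, hw⟩ := eq_one_of_mul_eq_one_of_unique AP.hZlNl AP.hZl_norm_p AP.huniq
    (hmap hb₁) (hmap hb₂) (hmap hb₃) (hmap hz) hπ
  have hc₂ : c₂ = 1 := AP.hinj_m _ _ hb₂ (one_mem _) (by rw [h2, map_one])
  have hc₃₁ : c₃ * c₁ = 1 :=
    AP.hinj_p _ _ (mul_mem hb₃ hb₁) (one_mem _) (by rw [map_mul, h31, map_one])
  have hb₂' : b₂ = 1 := congrArg Subtype.val hc₂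
  have hb₁₃ : b₁ * b₃ = 1 := mul_eq_one_comm.mp (congrArg Subtype.val hc₃₁)
  exact ⟨by rw [hb₂', mul_one, hb₁₃], AP.hker_Z w hz hw⟩

theorem Gh_inf_le {KL Kh : Subgroup G} (hKL31 : LD.cond31L KL) (hKL32 : LD.cond32L KL)
    (hU : ∀ α ∈ AP.PhiH ∩ D.PhiRed, KL ⊓ D.U α = Kh ⊓ D.U α)
    (hZ : (D.Z ⊓ AP.Gh) ⊓ KL = (D.Z ⊓ AP.Gh) ⊓ Kh) :
    AP.Gh ⊓ KL ≤ Kh := by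
  rintro x ⟨hxGh, hxKL⟩
  obtain ⟨p, hp, m, hm, p', hp', z, ⟨hzKL, hzZ⟩, rfl⟩ := hKL32.exists_mul_eq hxKL
  have hcomm : ∀ {a b : G}, (a ∈ AP.Uhp ∨ a ∈ AP.Uhm) → (b ∈ AP.Ulp ∨ b ∈ AP.Ulm) →
      Commute a b := fun ha hb =>
    AP.commute_of_mem (ha.elim Subgroup.mem_sup_left Subgroup.mem_sup_right)
      (hb.elim Subgroup.mem_sup_left Subgroup.mem_sup_right)
  obtain ⟨a₁, ⟨ha₁, ha₁U⟩, b₁, ⟨-, hb₁⟩, rfl⟩ := AP.exists_mul_eq_of_prodBij hKL31.2.2.1 hU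
    (fun a ha b hb => hcomm (.inl ha) (.inl hb)) hp
  obtain ⟨a₂, ⟨ha₂, ha₂U⟩, b₂, ⟨-, hb₂⟩, rfl⟩ := AP.exists_mul_eq_of_prodBij hKL31.2.2.2 hU
    (fun a ha b hb => hcomm (.inr ha) (.inr hb)) hm
  obtain ⟨a₃, ⟨ha₃, ha₃U⟩, b₃, ⟨-, hb₃⟩, rfl⟩ := AP.exists_mul_eq_of_prodBij hKL31.2.2.1 hU
    (fun a ha b hb => hcomm (.inl ha) (.inl hb)) hp'
  have hsplit : a₁ * b₁ * (a₂ * b₂) * (a₃ * b₃) * z = a₁ * a₂ * a₃ * (b₁ * b₂ * b₃ * z) := by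
    have h₁₂ := (hcomm (.inr ha₂U) (.inl hb₁)).eq
    have h₁₃ := (hcomm (.inl ha₃U) (.inl hb₁)).eq
    have h₂₃ := (hcomm (.inl ha₃U) (.inr hb₂)).eq
    simp only [mul_assoc]
    rw [← mul_assoc b₁ a₂, ← h₁₂, mul_assoc a₂, ← mul_assoc b₂ a₃, ← h₂₃, mul_assoc a₃,
      ← mul_assoc b₁ a₃, ← h₁₃, mul_assoc a₃]
  have haGh : a₁ * a₂ * a₃ ∈ AP.Gh := mul_mem (mul_mem (AP.genU_PhiH_le_Gh _ ha₁U)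
    (AP.genU_PhiH_le_Gh _ ha₂U)) (AP.genU_PhiH_le_Gh _ ha₃U)
  rw [hsplit] at hxGh ⊢
  obtain ⟨hb, hzGh⟩ := AP.mul_eq_one_of_mul_mem_Gh hb₁ hb₂ hb₃ hzZ
    ((AP.Gh.mul_mem_cancel_left haGh).mp hxGh)
  have hzKh : z ∈ Kh := ((hZ ▸ ⟨⟨hzZ, hzGh⟩, hzKL⟩ : z ∈ (D.Z ⊓ AP.Gh) ⊓ Kh)).2
  rw [hb, one_mul]
  exact mul_mem (mul_mem (mul_mem ha₁ ha₂) ha₃) hzKh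

end APData

theorem stmt7_general {G : Type*} [Group G] {ι : Type*} [DecidableEq ι] {Gl : Type*} [Group Gl]
    (D : RootData G ι) (LD : LeviDataW D) (AP : APData LD Gl)
    (KL Kh : Subgroup G)
    (hKL31 : LD.cond31L KL) (hKL32 : LD.cond32L KL)
    (hKh31 : AP.cond31h Kh) (hKh32 : AP.cond32h Kh) :
    AP.Gh ⊓ KL = Kh ↔
      ((∀ α ∈ AP.PhiH ∩ D.PhiRed, KL ⊓ D.U α = Kh ⊓ D.U α) ∧
        (D.Z ⊓ AP.Gh) ⊓ KL = (D.Z ⊓ AP.Gh) ⊓ Kh) := by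
  constructor
  · rintro rfl
    refine ⟨fun α hα => le_antisymm ?_ (inf_le_inf_right _ inf_le_right), ?_⟩
    · have hUGh : D.U α ≤ AP.Gh := AP.hUGh α (Finset.mem_inter.mp hα).1
      exact le_inf (le_inf (inf_le_right.trans hUGh) inf_le_left) inf_le_right
    · rw [← inf_assoc (D.Z ⊓ AP.Gh), inf_assoc D.Z AP.Gh AP.Gh, inf_idem]
  · rintro ⟨hU, hZ⟩
    have hroot : ∀ α ∈ AP.PhiH ∩ D.PhiRed, Kh ⊓ D.U α ≤ AP.Gh ⊓ KL := fun α hα => by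
      rw [← hU α hα]
      exact le_inf (inf_le_right.trans (AP.hUGh α (Finset.mem_inter.mp hα).1)) inf_le_left
    refine le_antisymm (AP.Gh_inf_le hKL31 hKL32 hU hZ) (le_of_cond31_cond32 hKh31 hKh32
      (fun α hα => hroot α (Finset.mem_of_mem_inter_left hα))
      (fun α hα => hroot α (Finset.mem_of_mem_inter_left hα)) ?_)
    rw [inf_comm, ← hZ]
    exact le_inf (inf_le_left.trans inf_le_right) inf_le_right

/-- Suppose `K_L ≤ L` satisfies conditions (3.1) and (3.2) with
respect to `L`, and `K_h ≤ G_h` satisfies conditions (3.1) and (3.2) with respect to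
`G_h`. Then `G_h ∩ K_L = K_h` if and only if `K_L ∩ U_α = K_h ∩ U_α` for every
`α ∈ Φ_h ∩ Φ_red` and `Z_h ∩ K_L = Z_h ∩ K_h`. -/
theorem stmt7 {G : Type*} [Group G] {ι : Type*} [DecidableEq ι] {Gl : Type*} [Group Gl]
    (D : RootData G ι) (LD : LeviDataW D) (AP : APData LD Gl)
    (KL Kh : Subgroup G) (hKLle : KL ≤ LD.L) (hKhle : Kh ≤ AP.Gh)
    (hKL31 : LD.cond31L KL) (hKL32 : LD.cond32L KL)
    (hKh31 : AP.cond31h Kh) (hKh32 : AP.cond32h Kh) :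
    AP.Gh ⊓ KL = Kh ↔
      ((∀ α ∈ AP.PhiH ∩ D.PhiRed, KL ⊓ D.U α = Kh ⊓ D.U α) ∧
        (D.Z ⊓ AP.Gh) ⊓ KL = (D.Z ⊓ AP.Gh) ⊓ Kh) :=
  stmt7_general D LD AP KL Kh hKL31 hKL32 hKh31 hKh32
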